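/- Let π be a group and let r, s be mutually inverse 4 × 4 matrices over Λ = MonoidAlgebra (ZMod 2) π (indices written 1,2,3,4), and let u, v, w ∈ π. Write E_{ij}(g) = 1 + (single g 1)·stdBasisMatrix i j. Set r' = r * E₁₃(u) * E₂₃(w), s' = E₂₃(w) * E₁₃(u) * s (so r', s' are mutually inverse, since each E is its own inverse in characteristic 2), and r'' = r' * E₃₄(v), s'' = E₃₄(v) * s'. Then Σ_p ⟨(r'' p 1)•u, (r'' p 2)•w⟩ * (s'' 3 p) = Σ_p ⟨(r' p 1)•u, (r' p 2)•w⟩ * (s' 3 p) + Σ_p ⟨(r p 1)•(u*v), (r p 2)•(w*v)⟩ * (s 4 p), as an identity in Λ. -/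

import Mathlib

/-- The coefficientwise "intersection pairing" `⟨x,y⟩ g = (x g)·(y g)` on the group
algebra `Λ = MonoidAlgebra (ZMod 2) π`. -/
noncomputable def interPairing {π : Type*} (x y : MonoidAlgebra (ZMod 2) π) :
    MonoidAlgebra (ZMod 2) π :=
  MonoidAlgebra.ofCoeff (Finsupp.zipWith (· * ·) (by simp) x.coeff y.coeff)

/-- The elementary matrix `E_{ij}(g) = 1 + (single g 1)·stdBasisMatrix i j`. -/
noncomputable def elemMat {π : Type*} [Group π] (i j : Fin 4) (g : π) :
    Matrix (Fin 4) (Fin 4) (MonoidAlgebra (ZMod 2) π) :=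
  1 + Matrix.single i j (MonoidAlgebra.single g 1)

lemma interPairing_mul_single {π : Type*} [Group π]
    (x y : MonoidAlgebra (ZMod 2) π) (g : π) :
    interPairing (x * MonoidAlgebra.single g 1) (y * MonoidAlgebra.single g 1)
      = interPairing x y * MonoidAlgebra.single g 1 := by
  ext h
  simp [interPairing, MonoidAlgebra.mul_single_apply]

/-- The identity `(2) = (1) + (3)` of Section 8.6 of the paper: the cocycle property
of the ghost labels `z_{12,3}^{u,w}` and `z_{12,4}^{uv,wv}` of the dual generalized
Grassmann invariant.  (Indices `1,2,3,4` in the paper are `0,1,2,3` here.) -/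
theorem dual_ghost_label_cocycle (π : Type*) [Group π]
    (r s : Matrix (Fin 4) (Fin 4) (MonoidAlgebra (ZMod 2) π))
    (hrs : r * s = 1) (hsr : s * r = 1) (u v w : π)
    (r' s' r'' s'' : Matrix (Fin 4) (Fin 4) (MonoidAlgebra (ZMod 2) π))
    (hr' : r' = r * elemMat 0 2 u * elemMat 1 2 w)
    (hs' : s' = elemMat 1 2 w * (elemMat 0 2 u * s))
    (hr'' : r'' = r' * elemMat 2 3 v)
    (hs'' : s'' = elemMat 2 3 v * s') :
    (∑ p : Fin 4,
      interPairing (r'' p 0 * MonoidAlgebra.single u 1) (r'' p 1 * MonoidAlgebra.single w 1)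
        * s'' 2 p) =
    (∑ p : Fin 4,
      interPairing (r' p 0 * MonoidAlgebra.single u 1) (r' p 1 * MonoidAlgebra.single w 1)
        * s' 2 p) +
    (∑ p : Fin 4,
      interPairing (r p 0 * MonoidAlgebra.single (u * v) 1)
        (r p 1 * MonoidAlgebra.single (w * v) 1) * s 3 p) := by
  have hr''0 : ∀ p, r'' p 0 = r' p 0 := by
    intro p
    rw [hr'']
    simp [elemMat, Matrix.mul_add]
  have hr''1 : ∀ p, r'' p 1 = r' p 1 := by
    intro p
    rw [hr'']
    simp [elemMat, Matrix.mul_add]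
  have hs''2 : ∀ p, s'' 2 p = s' 2 p + MonoidAlgebra.single v 1 * s' 3 p := by
    intro p
    rw [hs'']
    simp [elemMat, Matrix.add_mul]
  have hr0 : ∀ p, r' p 0 = r p 0 := by
    intro p
    rw [hr']
    simp [elemMat, Matrix.mul_add, Matrix.add_mul]
  have hr1 : ∀ p, r' p 1 = r p 1 := by
    intro p
    rw [hr']
    simp [elemMat, Matrix.mul_add, Matrix.add_mul]
  have hs3 : ∀ p, s' 3 p = s 3 p := by
    intro p
    rw [hs']
    simp [elemMat, Matrix.add_mul, Matrix.mul_add]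
  simp only [hr''0, hr''1, hs''2, mul_add, Finset.sum_add_distrib]
  congr 1
  refine Finset.sum_congr rfl fun p _ => ?_
  rw [hr0, hr1, hs3, ← mul_assoc, ← interPairing_mul_single, mul_assoc, mul_assoc,
    MonoidAlgebra.single_mul_single, one_mul, MonoidAlgebra.single_mul_single, one_mul]
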